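/- Let T be a tree in graph G with distinct vertices x, y on T, and let Q be a simple path from x to y in G. Then every edge of Q ∩ T that does not lie in the shadow of any T-leap on Q lies on the tree path T[x,y]. Here a T-leap on Q is a subpath L of Q with V(L) ∩ V(T) = {endpoints of L} and L ∩ T = ∅, and the shadow of a T-leap L with endpoints a,b is Q ∩ T[a,b]. -/

import Mathlib

open SimpleGraph

/-- `v` is a vertex of the tree `T` (given as a subgraph). -/
def TreeVertex {V : Type*} (T : SimpleGraph V) (v : V) : Prop :=
  ∃ x, T.Adj v x

/-- `L` is a `T`-leap: a path whose vertex set meets the vertex set of `T` exactly in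
its two endpoints and which shares no edge with `T`. -/
def IsTLeap {V : Type*} (G T : SimpleGraph V) {a b : V} (L : G.Walk a b) : Prop :=
  a ≠ b ∧ L.IsPath ∧ TreeVertex T a ∧ TreeVertex T b ∧
  (∀ v ∈ L.support, TreeVertex T v → v = a ∨ v = b) ∧
  (∀ e ∈ L.edges, e ∉ T.edgeSet)

section Aux

variable {V : Type*} {G T : SimpleGraph V}

lemma sym2_exists_rep (f : Sym2 V) : ∃ p q : V, f = s(p, q) :=
  Sym2.ind (fun p q => ⟨p, q, rfl⟩) f

/-- A walk in `T` avoiding `e` witnesses reachability in `T` minus `e`. -/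
lemma reach_of_avoid {e : Sym2 V} {a b : V} (p : T.Walk a b) (hp : e ∉ p.edges) :
    (T.deleteEdges {e}).Reachable a b :=
  ⟨p.toDeleteEdges {e} (fun f hf hfe => hp (Set.mem_singleton_iff.mp hfe ▸ hf))⟩

lemma IsTLeap.rev {a b : V} {L : G.Walk a b} (h : IsTLeap G T L) :
    IsTLeap G T L.reverse := by
  obtain ⟨h1, h2, h3, h4, h5, h6⟩ := h
  refine ⟨h1.symm, h2.reverse, h4, h3, ?_, ?_⟩
  · intro v hv hvT
    rw [SimpleGraph.Walk.support_reverse, List.mem_reverse] at hv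
    exact (h5 v hv hvT).symm
  · intro f hf
    rw [SimpleGraph.Walk.edges_reverse, List.mem_reverse] at hf
    exact h6 f hf

/-- Split a walk at the first `T`-vertex (the endpoint being a `T`-vertex). -/
lemma exists_first_treeVertex {w y : V} (W : G.Walk w y) (hy : TreeVertex T y) :
    ∃ (z : V) (W₁ : G.Walk w z) (W₂ : G.Walk z y),
      W = W₁.append W₂ ∧ TreeVertex T z ∧ ∀ v ∈ W₁.support, TreeVertex T v → v = z := by
  induction W with
  | nil =>
    refine ⟨_, Walk.nil, Walk.nil, rfl, hy, ?_⟩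
    intro v hv _
    simpa using hv
  | @cons u v' _ h W ih =>
    by_cases hu : TreeVertex T u
    · refine ⟨u, Walk.nil, Walk.cons h W, rfl, hu, ?_⟩
      intro v hv _
      simpa using hv
    · obtain ⟨z, W₁, W₂, hW, hz, hsupp⟩ := ih hy
      refine ⟨z, Walk.cons h W₁, W₂, by rw [Walk.cons_append, hW], hz, ?_⟩
      intro v hv hvT
      rw [Walk.support_cons, List.mem_cons] at hv
      rcases hv with rfl | hv
      · exact absurd hvT hu
      · exact hsupp v hv hvT

/-- Main construction: along a path between `T`-vertices that are separated in `T - e`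
and avoiding `e`, there is a `T`-leap whose endpoints are separated in `T - e`. -/
lemma find_leap {e : Sym2 V} :
    ∀ (n : ℕ) {c y : V} (W : G.Walk c y), W.length ≤ n → W.IsPath →
      TreeVertex T c → TreeVertex T y →
      ¬ (T.deleteEdges {e}).Reachable c y → e ∉ W.edges →
      ∃ (a b : V) (L : G.Walk a b) (W₁ : G.Walk c a) (W₂ : G.Walk b y),
        W = W₁.append (L.append W₂) ∧ IsTLeap G T L ∧
        ¬ (T.deleteEdges {e}).Reachable a b := by
  intro n
  induction n with
  | zero =>
    intro c y W hlen _ _ _ hnr _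
    cases W with
    | nil => exact absurd (Reachable.refl c) hnr
    | cons h W' => simp at hlen
  | succ n ih =>
    intro c y W hlen hpath hc hy hnr he
    cases W with
    | nil => exact absurd (Reachable.refl c) hnr
    | @cons _ w _ h W' =>
      obtain ⟨z, S₁, S₂, hsplit, hz, hfirst⟩ := exists_first_treeVertex W' hy
      subst hsplit
      by_cases hcz : (T.deleteEdges {e}).Reachable c z
      · -- recurse on the rest of the walk
        have hzy : ¬ (T.deleteEdges {e}).Reachable z y := fun hr => hnr (hcz.trans hr)
        have hS₂len : S₂.length ≤ n := by
          simp [Walk.length_cons, Walk.length_append] at hlen; omega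
        have hS₂path : S₂.IsPath := hpath.of_cons.of_append_right
        have heS₂ : e ∉ S₂.edges := by
          simp only [Walk.edges_cons, Walk.edges_append, List.mem_cons, List.mem_append] at he
          tauto
        obtain ⟨a, b, L, W₁, W₂, hdec, hleap, hnr'⟩ :=
          ih S₂ hS₂len hS₂path hz hy hzy heS₂
        refine ⟨a, b, L, (Walk.cons h S₁).append W₁, W₂, ?_, hleap, hnr'⟩
        rw [hdec]
        simp [Walk.cons_append, Walk.append_assoc]
      · -- the initial segment is a leap
        refine ⟨c, z, Walk.cons h S₁, Walk.nil, S₂, by simp [Walk.cons_append], ?_, hcz⟩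
        have hLpath : (Walk.cons h S₁).IsPath := by
          have : ((Walk.cons h S₁).append S₂).IsPath := by
            simpa [Walk.cons_append] using hpath
          exact this.of_append_left
        have hsupport : ∀ v ∈ (Walk.cons h S₁).support, TreeVertex T v → v = c ∨ v = z := by
          intro v hv hvT
          rw [Walk.support_cons, List.mem_cons] at hv
          rcases hv with rfl | hv
          · exact Or.inl rfl
          · exact Or.inr (hfirst v hv hvT)
        refine ⟨fun h' => hcz (h' ▸ Reachable.refl c), hLpath, hc, hz, hsupport, ?_⟩
        intro f hf hfT
        obtain ⟨p, q, rfl⟩ := sym2_exists_rep f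
        have hadjpq : T.Adj p q := hfT
        have hpmem := (Walk.cons h S₁).fst_mem_support_of_mem_edges hf
        have hqmem := (Walk.cons h S₁).snd_mem_support_of_mem_edges hf
        have hp := hsupport p hpmem ⟨q, hadjpq⟩
        have hq := hsupport q hqmem ⟨p, hadjpq.symm⟩
        have hpq : p ≠ q := hadjpq.ne
        have hfeq : s(p, q) = s(c, z) := by
          rcases hp with rfl | rfl <;> rcases hq with rfl | rfl
          · exact absurd rfl hpq
          · rfl
          · exact Sym2.eq_swap
          · exact absurd rfl hpq
        have hfW : s(p, q) ∈ (Walk.cons h (S₁.append S₂)).edges := by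
          simp only [Walk.edges_cons, Walk.edges_append, List.mem_cons, List.mem_append]
          rcases (by simpa [Walk.edges_cons] using hf : s(p,q) = s(c,w) ∨ s(p,q) ∈ S₁.edges)
            with h' | h'
          · exact Or.inl h'
          · exact Or.inr (Or.inl h')
        have hfe : s(p, q) ≠ e := fun h' => he (h' ▸ hfW)
        have hadjcz : (T.deleteEdges {e}).Adj c z := by
          rw [SimpleGraph.deleteEdges_adj]
          refine ⟨T.mem_edgeSet.mp (hfeq ▸ (T.mem_edgeSet.mpr hadjpq)), ?_⟩
          rw [← hfeq]
          simpa using hfe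
        exact hcz hadjcz.reachable

lemma split_at_edge {x y : V} (Q : G.Walk x y) {e : Sym2 V} (he : e ∈ Q.edges) :
    ∃ (u v : V) (P₁ : G.Walk x u) (P₂ : G.Walk v y) (h : G.Adj u v),
      e = s(u, v) ∧ Q = P₁.append (Walk.cons h P₂) := by
  induction Q with
  | nil => simp at he
  | @cons u v _ h p ih =>
    rw [Walk.edges_cons, List.mem_cons] at he
    rcases he with he | he
    · exact ⟨u, v, Walk.nil, p, h, he, rfl⟩
    · obtain ⟨a, b, P₁, P₂, hadj, heq, hdec⟩ := ih he
      exact ⟨a, b, Walk.cons h P₁, P₂, hadj, heq, by rw [Walk.cons_append, hdec]⟩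

end Aux

/-- Every edge of `Q ∩ T` that does not lie in the shadow of any `T`-leap on `Q` lies on
the tree path `T[x,y]`.  (The shadow of a `T`-leap `L` on `Q` with endpoints `a,b` is
`Q ∩ T[a,b]`.) -/
theorem edge_not_in_shadow_lies_on_tree_path {V : Type*}
    (G T : SimpleGraph V) (hTG : T ≤ G) (hacyc : T.IsAcyclic)
    (hconn : ∀ a b : V, TreeVertex T a → TreeVertex T b → T.Reachable a b)
    {x y : V} (hxy : x ≠ y) (hx : TreeVertex T x) (hy : TreeVertex T y)
    (Q : G.Walk x y) (hQ : Q.IsPath) :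
    ∀ e ∈ Q.edges, e ∈ T.edgeSet →
      (¬ ∃ (a b : V) (L : G.Walk a b) (W₁ : G.Walk x a) (W₂ : G.Walk b y)
          (p : T.Walk a b), Q = W₁.append (L.append W₂) ∧ IsTLeap G T L ∧
          p.IsPath ∧ e ∈ p.edges) →
      ∀ pxy : T.Walk x y, pxy.IsPath → e ∈ pxy.edges := by
  classical
  intro e he heT hne pxy hpxy
  by_contra hmem
  apply hne
  obtain ⟨u, v, P₁, P₂, hadjG, heq, hQdec⟩ := split_at_edge Q he
  subst heq
  have hTadj : T.Adj u v := heT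
  have hbridge : ¬ (T.deleteEdges {s(u, v)}).Reachable u v :=
    isBridge_iff.mp (isAcyclic_iff_forall_edge_isBridge.mp hacyc heT)
  have hreach_xy : (T.deleteEdges {s(u, v)}).Reachable x y := reach_of_avoid pxy hmem
  -- path facts
  have hQP : (P₁.append (Walk.cons hadjG P₂)).IsPath := hQdec ▸ hQ
  have hP₁ : P₁.IsPath := hQP.of_append_left
  have hP₂ : P₂.IsPath := hQP.of_append_right.of_cons
  have hnd : (P₁.edges ++ s(u, v) :: P₂.edges).Nodup := by
    have := hQ.isTrail.edges_nodup
    rwa [hQdec, Walk.edges_append, Walk.edges_cons] at this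
  obtain ⟨hnd₁, hnd₂, hdisj⟩ := List.nodup_append'.mp hnd
  have heP₁ : s(u, v) ∉ P₁.edges := fun h' => hdisj h' List.mem_cons_self
  have heP₂ : s(u, v) ∉ P₂.edges := (List.nodup_cons.mp hnd₂).1
  -- obtain the tree path through e between separated T-vertices
  have getp : ∀ {a b : V}, TreeVertex T a → TreeVertex T b →
      ¬ (T.deleteEdges {s(u, v)}).Reachable a b →
      ∃ p : T.Walk a b, p.IsPath ∧ s(u, v) ∈ p.edges := by
    intro a b ha hb hnr
    obtain ⟨w⟩ := hconn a b ha hb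
    refine ⟨w.bypass, w.bypass_isPath, ?_⟩
    by_contra hno
    exact hnr (reach_of_avoid w.bypass hno)
  by_cases hvy : (T.deleteEdges {s(u, v)}).Reachable v y
  · -- leap lives on the reversed prefix
    have hnux : ¬ (T.deleteEdges {s(u, v)}).Reachable u x :=
      fun hux => hbridge (hux.trans (hreach_xy.trans hvy.symm))
    obtain ⟨a, b, L, W₁, W₂, hdec, hleap, hnr'⟩ :=
      find_leap (T := T) P₁.reverse.length P₁.reverse le_rfl hP₁.reverse
        ⟨v, hTadj⟩ hx hnux (by simpa [Walk.edges_reverse] using heP₁)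
    obtain ⟨p, hpP, hpe⟩ := getp hleap.2.2.2.1 hleap.2.2.1 (fun h' => hnr' h'.symm)
    refine ⟨b, a, L.reverse, W₂.reverse, W₁.reverse.append (Walk.cons hadjG P₂), p,
      ?_, hleap.rev, hpP, hpe⟩
    have h1 : P₁ = (W₁.append (L.append W₂)).reverse := by
      rw [← hdec, Walk.reverse_reverse]
    rw [hQdec, h1]
    simp [Walk.reverse_append, Walk.append_assoc]
  · -- leap lives on the suffix
    obtain ⟨a, b, L, W₁, W₂, hdec, hleap, hnr'⟩ :=
      find_leap (T := T) P₂.length P₂ le_rfl hP₂ ⟨u, hTadj.symm⟩ hy hvy heP₂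
    obtain ⟨p, hpP, hpe⟩ := getp hleap.2.2.1 hleap.2.2.2.1 hnr'
    refine ⟨a, b, L, P₁.append (Walk.cons hadjG W₁), W₂, p, ?_, hleap, hpP, hpe⟩
    rw [hQdec, hdec]
    simp [Walk.cons_append, ← Walk.append_assoc]
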